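/- Let b ≥ 2 be an integer, k a positive integer, and j ∈ ℕ. Let x ∈ [0,1) and write x = c·b^{−a_v} + x' with c ∈ ℕ, 0 ≤ c < b^{a_v}, and x' ∈ [0, b^{−a_v}). Then: (i) W_k^{(j)}(x) = ((1 − ω_b^{−cκ_v})/(1 − ω_b^{−κ_v}))·W_k^{(j)}(b^{−a_v}) + ω_b^{−cκ_v}·W_k^{(j)}(x'); (ii) I^{(j)}(k) = W_k^{(j)}(b^{−a_v})/(1 − ω_b^{−κ_v}). -/

import Mathlib

open MeasureTheory Complex
open scoped ENNReal NNReal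

noncomputable section

namespace WalshPaper

/-- `ω_b = exp(2π√-1/b)`. -/
def omega (b : ℕ) : ℂ := Complex.exp (2 * Real.pi * Complex.I / b)

/-- `conj ω_b`. -/
def omegaBar (b : ℕ) : ℂ := (starRingEnd ℂ) (omega b)

/-- The `j`-th `b`-adic digit `ξ_j` of `x ∈ [0,1)` (the coefficient of `b^{-j}`),
taking the expansion with infinitely many digits different from `b-1`. -/
def xdigit (b j : ℕ) (x : ℝ) : ℕ := (⌊x * (b : ℝ) ^ j⌋ % (b : ℤ)).toNat

/-- The `k`-th `b`-adic Walsh function: `wal_k(x) = ω_b^(κ_1 ξ_{a_1} + ⋯ + κ_v ξ_{a_v})`,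
written as a sum over all digit positions of `k` (digits of `k` beyond position `k` vanish). -/
def wal (b k : ℕ) (x : ℝ) : ℂ :=
  omega b ^ ∑ j ∈ Finset.range k, (k / b ^ j % b) * xdigit b (j + 1) x

/-- The list of terms `κ_i b^{a_i - 1}` of the `b`-adic expansion of `k`, lowest first,
i.e. `[κ_v b^{a_v-1}, …, κ_1 b^{a_1-1}]`. -/
def terms (b k : ℕ) : List ℕ :=
  (((Nat.digits b k).zipIdx.map Prod.swap).filter fun p => p.2 ≠ 0).map fun p => p.2 * b ^ p.1

/-- `v(k)`, the number of nonzero `b`-adic digits of `k`. -/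
def nu (b k : ℕ) : ℕ := (terms b k).length

/-- The list `[a_1, …, a_v]` (decreasing). -/
def alist (b k : ℕ) : List ℕ :=
  ((((Nat.digits b k).zipIdx.map Prod.swap).filter fun p => p.2 ≠ 0).map fun p => p.1 + 1).reverse

/-- The list `[κ_v, κ_{v-1}, …, κ_1]` (corresponding digits, lowest first). -/
def kappas (b k : ℕ) : List ℕ :=
  (((Nat.digits b k).zipIdx.map Prod.swap).filter fun p => p.2 ≠ 0).map fun p => p.2

/-- `μ(k) = a_1 + ⋯ + a_v`. -/
def mu (b k : ℕ) : ℕ := (alist b k).sum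

/-- `μ_α(k) = a_1 + ⋯ + a_{min(α,v)}`. -/
def muAlpha (b α k : ℕ) : ℕ := ((alist b k).take α).sum

/-- `a_v`, the smallest exponent (junk value `0` for `k = 0`). -/
def aLow (b k : ℕ) : ℕ := ((alist b k).getLast?).getD 0

/-- `κ_v`, the lowest nonzero digit of `k`. -/
def kapLow (b k : ℕ) : ℕ := k / b ^ (aLow b k - 1) % b

/-- `μ̄_α(k)`: equals `a_1 + ⋯ + a_v + (α - v) a_v` if `v ≤ α`, and `a_1 + ⋯ + a_α` else. -/
def muBar (b α k : ℕ) : ℕ :=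
  if nu b k ≤ α then mu b k + (α - nu b k) * aLow b k else muAlpha b α k

/-- `k_{≤ n} = Σ_{i=1}^{min(n,v)} κ_i b^{a_i - 1}` (the `min(n,v)` highest terms). -/
def kHigh (b k n : ℕ) : ℕ := ((terms b k).reverse.take n).sum

/-- `k_{> n} = Σ_{i=n+1}^{v} κ_i b^{a_i - 1}` (the remaining lower terms). -/
def kLow (b k n : ℕ) : ℕ := ((terms b k).reverse.drop n).sum

/-- Auxiliary function defining `W` along the list of terms of `k`, lowest term first. -/
def WAux (b : ℕ) : List ℕ → ℝ → ℂ
  | [], _ => 1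
  | t :: rest, x => ∫ y in (0:ℝ)..x, (starRingEnd ℂ) (wal b t y) * WAux b rest y

/-- `W_k : [0,1] → ℂ`, defined by `W_0 = 1` and `W_k(x) = ∫_0^x conj(wal_{κ_v b^{a_v-1}}(y)) W_{k'}(y) dy`
with `k' = k - κ_v b^{a_v-1}`. -/
def W (b k : ℕ) (x : ℝ) : ℂ := WAux b (terms b k) x

/-- `I(k) = ∫_0^1 W_k(x) dx`. -/
def I (b k : ℕ) : ℂ := ∫ x in (0:ℝ)..1, W b k x

/-- The iterated functions `W_k^{(j)}`: `W_k^{(0)} = W_k`,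
`W_k^{(j+1)}(x) = ∫_0^x (W_k^{(j)}(y) - I^{(j)}(k)) dy` where `I^{(j)}(k) = ∫_0^1 W_k^{(j)}`. -/
def Wj (b k : ℕ) : ℕ → ℝ → ℂ
  | 0 => W b k
  | j + 1 => fun x => ∫ y in (0:ℝ)..x, (Wj b k j y - ∫ t in (0:ℝ)..1, Wj b k j t)

/-- `I^{(j)}(k) = ∫_0^1 W_k^{(j)}(x) dx`. -/
def Ij (b k j : ℕ) : ℂ := ∫ x in (0:ℝ)..1, Wj b k j x

/-- The `k`-th Walsh coefficient of `f : [0,1) → ℝ`. -/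
def walshCoeff (b : ℕ) (f : ℝ → ℝ) (k : ℕ) : ℂ :=
  ∫ x in (0:ℝ)..1, (f x : ℂ) * (starRingEnd ℂ) (wal b k x)

/-- The half-open unit cube `[0,1)^s`. -/
def cube (s : ℕ) : Set (Fin s → ℝ) := Set.univ.pi fun _ => Set.Ico (0:ℝ) 1

/-- The closed unit cube `[0,1]^s`. -/
def cubeC (s : ℕ) : Set (Fin s → ℝ) := Set.univ.pi fun _ => Set.Icc (0:ℝ) 1

/-- The `k⃗`-th Walsh coefficient of `f : [0,1)^s → ℝ`. -/
def walshCoeffS (b s : ℕ) (f : (Fin s → ℝ) → ℝ) (k : Fin s → ℕ) : ℂ :=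
  ∫ x in cube s, (f x : ℂ) * (starRingEnd ℂ) (∏ j, wal b (k j) (x j))

/-- `m_b = 2 sin(π/b)`. -/
def mb (b : ℕ) : ℝ := 2 * Real.sin (Real.pi / b)

/-- `M_b = max_{c=1,…,b-1} |1 - ω_b^{-c}|`. -/
def Mb (b : ℕ) : ℝ := if Even b then 2 else 2 * Real.sin ((b + 1) * Real.pi / (2 * b))

/-- `C_v(b) = (b m_b/(b - M_b)) (1 - (M_b/b)^v)`. -/
def Cv (b v : ℕ) : ℝ := (b * mb b / (b - Mb b)) * (1 - (Mb b / b) ^ v)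

/-- The partial derivative of `g` in the `j`-th coordinate. -/
def pderiv {s : ℕ} (j : Fin s) (g : (Fin s → ℝ) → ℝ) (x : Fin s → ℝ) : ℝ :=
  deriv (fun t => g (Function.update x j t)) (x j)

/-- The mixed partial derivative `f^{(m_1,…,m_s)} = (∂/∂x_1)^{m_1} ⋯ (∂/∂x_s)^{m_s} f`. -/
def mixedPartial {s : ℕ} (m : Fin s → ℕ) (f : (Fin s → ℝ) → ℝ) : (Fin s → ℝ) → ℝ :=
  (List.finRange s).foldr (fun j g => (fun h => pderiv j h)^[m j] g) f

/-- `f` has continuous mixed partial derivatives up to order `α_j` in each variable `x_j`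
on the unit cube. -/
def HasContMixedPartials {s : ℕ} (α : Fin s → ℕ) (f : (Fin s → ℝ) → ℝ) : Prop :=
  ∀ m : Fin s → ℕ, (∀ j, m j ≤ α j) →
    ContinuousOn (mixedPartial m f) (cubeC s) ∧
      ∀ j : Fin s, m j < α j → ∀ x ∈ cubeC s,
        DifferentiableAt ℝ (fun t => mixedPartial m f (Function.update x j t)) (x j)

/-- `b_r(x) = B_r(x)/r!`, the normalized Bernoulli polynomial. -/
def bpoly (r : ℕ) (x : ℝ) : ℝ := (Polynomial.aeval x) (Polynomial.bernoulli r) / r.factorial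

/-- `b̃_α(x-y)`. -/
def btilde (α : ℕ) (x y : ℝ) : ℝ :=
  if Even α then bpoly α |x - y| else (if x < y then -1 else 1) * bpoly α |x - y|


lemma omegaBar_eq (b : ℕ) : omegaBar b = Complex.exp (-(2 * Real.pi * Complex.I / b)) := by
  unfold omegaBar omega
  rw [← Complex.exp_conj]
  congr 1
  simp only [map_div₀, map_mul, Complex.conj_I, map_ofNat, Complex.conj_ofReal, map_natCast]
  ring

lemma omegaBar_pow_base (b : ℕ) (hb : 2 ≤ b) : omegaBar b ^ b = 1 := by
  have hb0 : (b : ℂ) ≠ 0 := Nat.cast_ne_zero.mpr (by omega)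
  rw [omegaBar_eq, ← Complex.exp_nat_mul]
  have : (b : ℂ) * -(2 * Real.pi * Complex.I / b) = -(2 * Real.pi * Complex.I) := by
    field_simp
  rw [this, Complex.exp_neg, Complex.exp_two_pi_mul_I, inv_one]

lemma omegaBar_pow_ne_one (b : ℕ) (hb : 2 ≤ b) {κ : ℕ} (h0 : 0 < κ) (h1 : κ < b) :
    omegaBar b ^ κ ≠ 1 := by
  have hb0 : (b : ℂ) ≠ 0 := Nat.cast_ne_zero.mpr (by omega)
  rw [omegaBar_eq, ← Complex.exp_nat_mul]
  intro h
  rw [Complex.exp_eq_one_iff] at h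
  obtain ⟨n, hn⟩ := h
  have h2 : (2 * (Real.pi:ℂ) * Complex.I) ≠ 0 := by
    simp [Real.pi_ne_zero, Complex.I_ne_zero]
  have key : -((κ : ℂ) / b) = (n : ℂ) := by
    have heq : ((κ:ℂ)) * -(2 * Real.pi * Complex.I / b) =
        (-((κ:ℂ)/b)) * (2 * Real.pi * Complex.I) := by
      field_simp
    rw [heq] at hn
    exact mul_right_cancel₀ h2 hn
  have keyr : -((κ : ℝ) / b) = (n : ℝ) := by
    have := congrArg Complex.re key
    simpa using this
  have hbR : (0:ℝ) < b := by positivity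
  have h3 : (0:ℝ) < (κ:ℝ)/b := by positivity
  have h4 : (κ:ℝ)/b < 1 := by
    rw [div_lt_one hbR]; exact_mod_cast h1
  have hn1 : (n:ℝ) < 0 := by rw [← keyr]; linarith
  have hn2 : (-1:ℝ) < n := by rw [← keyr]; linarith
  have g1 : n < 0 := by exact_mod_cast hn1
  have g2 : (-1:ℤ) < n := by exact_mod_cast hn2
  omega

lemma pow_mod_eq {b : ℕ} {u : ℂ} (hu : u ^ b = 1) (c : ℕ) : u ^ (c % b) = u ^ c := by
  conv_rhs => rw [← Nat.mod_add_div c b, pow_add, pow_mul, hu, one_pow, mul_one]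

lemma xdigit_add_nat {b : ℕ} (hb : 2 ≤ b) (a c : ℕ) {y : ℝ}
    (hy0 : 0 ≤ y) (hy : y < (b:ℝ) ^ (-(a:ℤ))) :
    xdigit b a ((c : ℝ) * (b:ℝ) ^ (-(a:ℤ)) + y) = c % b := by
  have hbR : (0:ℝ) < b := by positivity
  have hbne : (b:ℝ) ≠ 0 := ne_of_gt hbR
  have hpa : (0:ℝ) < (b:ℝ)^a := by positivity
  unfold xdigit
  have hmul : ((c : ℝ) * (b:ℝ) ^ (-(a:ℤ)) + y) * (b : ℝ) ^ a = c + y * (b:ℝ)^a := by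
    rw [add_mul, mul_assoc, ← zpow_natCast (b:ℝ) a, ← zpow_add₀ hbne]
    simp
  rw [hmul]
  have h1 : 0 ≤ y * (b:ℝ)^a := by positivity
  have h2 : y * (b:ℝ)^a < 1 := by
    have hz : (b:ℝ)^(-(a:ℤ)) = ((b:ℝ)^a)⁻¹ := by rw [zpow_neg, zpow_natCast]
    rw [hz] at hy
    calc y * (b:ℝ)^a < ((b:ℝ)^a)⁻¹ * (b:ℝ)^a := by
          exact mul_lt_mul_of_pos_right hy hpa
    _ = 1 := inv_mul_cancel₀ (ne_of_gt hpa)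
  have hfl : ⌊(c:ℝ) + y * (b:ℝ)^a⌋ = (c:ℤ) := by
    rw [Int.floor_eq_iff]
    constructor
    · push_cast; linarith
    · push_cast; linarith
  rw [hfl]
  omega

lemma xdigit_periodic {b : ℕ} (hb : 2 ≤ b) (a : ℕ) :
    Function.Periodic (fun x => xdigit b a x) ((b:ℝ) ^ (1 - (a:ℤ))) := by
  intro x
  have hbne : (b:ℝ) ≠ 0 := by positivity
  simp only [xdigit]
  have hx : (x + (b:ℝ) ^ (1-(a:ℤ))) * (b:ℝ)^a = x * (b:ℝ)^a + (b:ℤ) := by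
    rw [add_mul, ← zpow_natCast (b:ℝ) a, ← zpow_add₀ hbne]
    push_cast
    ring_nf
    simp [zpow_one]
  rw [hx, Int.floor_add_intCast]
  simp [Int.add_mul_emod_self_left]


lemma wal_single {b : ℕ} (hb : 2 ≤ b) {κ a : ℕ} (hκ0 : 0 < κ) (hκ : κ < b) (ha : 1 ≤ a)
    (x : ℝ) : wal b (κ * b ^ (a-1)) x = omega b ^ (κ * xdigit b a x) := by
  unfold wal
  have hb1 : 1 < b := hb
  have hbpos : 0 < b := by omega
  have hmem : a - 1 ∈ Finset.range (κ * b ^ (a-1)) := by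
    rw [Finset.mem_range]
    calc a - 1 < b ^ (a-1) := Nat.lt_pow_self hb1
    _ ≤ κ * b ^ (a-1) := Nat.le_mul_of_pos_left _ hκ0
  rw [Finset.sum_eq_single_of_mem (a-1) hmem]
  · rw [Nat.mul_div_cancel _ (Nat.pow_pos hbpos), Nat.mod_eq_of_lt hκ,
      show a - 1 + 1 = a by omega]
  · intro j hj hne
    rcases lt_or_gt_of_ne hne with hlt | hgt
    · -- j < a - 1
      have hdvd : b ∣ κ * b ^ (a-1) / b ^ j := by
        have : κ * b ^ (a-1) / b ^ j = κ * b ^ (a-1-j) := by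
          rw [Nat.mul_div_assoc _ (pow_dvd_pow b (by omega)), Nat.pow_div (by omega) hbpos]
        rw [this]
        have : a - 1 - j = (a - 1 - j - 1) + 1 := by omega
        rw [this, pow_succ]
        exact ⟨κ * b ^ (a-1-j-1), by ring⟩
      obtain ⟨t, ht⟩ := hdvd
      rw [ht]
      simp [Nat.mul_mod_right]
    · -- j > a - 1
      have : κ * b ^ (a-1) < b ^ j := by
        calc κ * b ^ (a-1) < b * b ^ (a-1) := by
              exact Nat.mul_lt_mul_of_lt_of_le hκ le_rfl (Nat.pow_pos hbpos)
        _ = b ^ (a-1+1) := by rw [pow_succ]; ring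
        _ ≤ b ^ j := Nat.pow_le_pow_right (by omega) (by omega)
      rw [Nat.div_eq_of_lt this]
      simp


lemma measurable_xdigit (b j : ℕ) : Measurable (xdigit b j) := by
  unfold xdigit
  exact Measurable.comp (f := fun x : ℝ => ⌊x * (b:ℝ)^j⌋) (g := fun n : ℤ => (n % (b:ℤ)).toNat)
    (measurable_from_top) ((measurable_id.mul_const _).floor)

lemma conj_wal_single {b : ℕ} (hb : 2 ≤ b) {κ a : ℕ} (hκ0 : 0 < κ) (hκ : κ < b) (ha : 1 ≤ a)
    (x : ℝ) : (starRingEnd ℂ) (wal b (κ * b ^ (a-1)) x) = omegaBar b ^ (κ * xdigit b a x) := by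
  rw [wal_single hb hκ0 hκ ha, map_pow]
  rfl

lemma norm_omegaBar_pow (b : ℕ) (n : ℕ) : ‖omegaBar b ^ n‖ = 1 := by
  rw [norm_pow, omegaBar_eq]
  have : -(2 * (Real.pi:ℂ) * Complex.I / b) = ((-(2 * Real.pi / b) : ℝ) : ℂ) * Complex.I := by
    push_cast
    ring
  rw [this]
  rw [Complex.norm_exp_ofReal_mul_I, one_pow]

lemma measurable_conj_wal_single (b κ a : ℕ) :
    Measurable (fun x => omegaBar b ^ (κ * xdigit b a x)) :=
  Measurable.comp (f := xdigit b a) (g := fun n : ℕ => omegaBar b ^ (κ * n))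
    (measurable_from_top) (measurable_xdigit b a)

lemma intervalIntegrable_pow_mul {b κ a : ℕ} {G : ℝ → ℂ} (hG : Continuous G) (u v : ℝ) :
    IntervalIntegrable (fun y => omegaBar b ^ (κ * xdigit b a y) * G y) volume u v := by
  apply (hG.intervalIntegrable u v).mono_fun
  · exact ((measurable_conj_wal_single b κ a).mul hG.measurable).aestronglyMeasurable
  · apply Filter.Eventually.of_forall
    intro x
    simp only [norm_mul, norm_omegaBar_pow, one_mul, le_refl]

inductive Good (b : ℕ) : ℕ → List ℕ → Prop
  | nil (m : ℕ) : Good b m []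
  | cons (m κ a : ℕ) (rest : List ℕ) (hκ0 : 0 < κ) (hκb : κ < b) (hma : m < a)
      (hrest : Good b a rest) : Good b m (κ * b ^ (a-1) :: rest)

lemma waux_good {b : ℕ} (hb : 2 ≤ b) {m : ℕ} {L : List ℕ} (h : Good b m L) :
    Continuous (WAux b L) ∧ Function.Periodic (WAux b L) ((b:ℝ) ^ (-(m:ℤ))) := by
  induction h with
  | nil m => exact ⟨continuous_const, fun x => rfl⟩
  | cons m κ a rest hκ0 hκb hma hrest ih =>
    obtain ⟨hcont, hper⟩ := ih
    have ha : 1 ≤ a := by omega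
    have hbne : (b:ℝ) ≠ 0 := by positivity
    set F : ℝ → ℂ := fun y => (starRingEnd ℂ) (wal b (κ * b ^ (a-1)) y) * WAux b rest y with hF
    have hwal : ∀ y, F y = omegaBar b ^ (κ * xdigit b a y) * WAux b rest y := fun y => by
      rw [hF]; simp only; rw [conj_wal_single hb hκ0 hκb ha]
    have hint : ∀ u v : ℝ, IntervalIntegrable F volume u v := by
      intro u v
      have : F = fun y => omegaBar b ^ (κ * xdigit b a y) * WAux b rest y := funext hwal
      rw [this]
      exact intervalIntegrable_pow_mul hcont u v
    have hW : WAux b (κ * b ^ (a-1) :: rest) = fun x => ∫ y in (0:ℝ)..x, F y := rfl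
    have hcont' : Continuous (WAux b (κ * b ^ (a-1) :: rest)) := by
      rw [hW]; exact intervalIntegral.continuous_primitive hint 0
    refine ⟨hcont', ?_⟩
    set β : ℝ := (b:ℝ) ^ (-(a:ℤ)) with hβ
    set p : ℝ := (b:ℝ) ^ (1-(a:ℤ)) with hp
    have hpβ : p = (b:ℕ) * β := by
      rw [hp, hβ, show (1-(a:ℤ)) = 1 + (-(a:ℤ)) by ring, zpow_add₀ hbne, zpow_one]
    have hβpos : 0 < β := by rw [hβ]; positivity
    have hwper : Function.Periodic F p := by
      intro x
      simp only [hwal]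
      have h1 : xdigit b a (x + p) = xdigit b a x := xdigit_periodic hb a x
      have h2 : WAux b rest (x + p) = WAux b rest x := by
        rw [hpβ]; exact (hper.nat_mul b) x
      rw [h1, h2]
    have hblock : ∀ i : ℕ, i < b → (∫ y in ((i:ℝ)*β)..((i:ℝ)*β + β), F y)
        = (omegaBar b ^ κ) ^ i * ∫ y in (0:ℝ)..β, WAux b rest y := by
      intro i hi
      have hcomp := intervalIntegral.integral_comp_add_right (a := 0) (b := β) F ((i:ℝ)*β)
      rw [zero_add, add_comm β ((i:ℝ)*β)] at hcomp
      rw [← hcomp]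
      have hae : ∀ᵐ y ∂(volume : Measure ℝ), y ∈ Set.uIoc (0:ℝ) β →
          F (y + (i:ℝ)*β) = omegaBar b ^ (κ * i) * WAux b rest y := by
        filter_upwards [compl_mem_ae_iff.2 (MeasureTheory.measure_singleton β)] with y hyβ hy
        rw [Set.uIoc_of_le hβpos.le] at hy
        have hy0 : 0 ≤ y := hy.1.le
        have hyb : y < β := lt_of_le_of_ne hy.2 (by simpa using hyβ)
        rw [hwal]
        have hx : xdigit b a (y + (i:ℝ)*β) = i % b := by
          rw [add_comm]; exact xdigit_add_nat hb a i hy0 hyb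
        have hG : WAux b rest (y + (i:ℝ)*β) = WAux b rest y := (hper.nat_mul i) y
        rw [hx, hG, Nat.mod_eq_of_lt hi]
      rw [intervalIntegral.integral_congr_ae hae, intervalIntegral.integral_const_mul,
        pow_mul]
    have hzero : (∫ y in (0:ℝ)..p, F y) = 0 := by
      have hadj := intervalIntegral.sum_integral_adjacent_intervals
        (a := fun i : ℕ => (i:ℝ)*β) (n := b) (f := F) (μ := volume)
        (fun i _ => hint _ _)
      beta_reduce at hadj
      rw [show ((0:ℕ):ℝ)*β = 0 by simp] at hadj
      rw [show ((b:ℕ):ℝ)*β = p by rw [hpβ]] at hadj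
      rw [← hadj]
      have hcongr : ∀ i ∈ Finset.range b, (∫ y in ((i:ℝ)*β)..(((i+1:ℕ)):ℝ)*β, F y)
          = (omegaBar b ^ κ) ^ i * ∫ y in (0:ℝ)..β, WAux b rest y := by
        intro i hi
        rw [show (((i+1:ℕ)):ℝ)*β = (i:ℝ)*β + β by push_cast; ring]
        exact hblock i (Finset.mem_range.1 hi)
      rw [Finset.sum_congr rfl hcongr, ← Finset.sum_mul]
      have hq1 : omegaBar b ^ κ ≠ 1 := omegaBar_pow_ne_one b hb hκ0 hκb
      have hqb : (omegaBar b ^ κ) ^ b = 1 := by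
        rw [pow_right_comm, omegaBar_pow_base b hb, one_pow]
      rw [geom_sum_eq hq1, hqb]
      simp
    have hperp : Function.Periodic (WAux b (κ * b ^ (a-1) :: rest)) p := by
      intro x
      show (∫ y in (0:ℝ)..(x+p), F y) = ∫ y in (0:ℝ)..x, F y
      rw [← intervalIntegral.integral_add_adjacent_intervals (hint 0 x) (hint x (x+p)),
        hwper.intervalIntegral_add_eq x 0, zero_add, hzero, add_zero]
    obtain ⟨e, he⟩ : ∃ e : ℕ, (e:ℤ) = (a:ℤ) - 1 - m := ⟨a - 1 - m, by omega⟩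
    have hconv : (b:ℝ)^(-(m:ℤ)) = (b^e : ℕ) * p := by
      push_cast
      rw [hp, ← zpow_natCast (b:ℝ) e, ← zpow_add₀ hbne]
      congr 1
      omega
    rw [hconv]
    exact hperp.nat_mul _

lemma digits_getD {b : ℕ} (hb : 1 < b) (k i : ℕ) :
    (Nat.digits b k).getD i 0 = k / b ^ i % b := by
  induction i generalizing k with
  | zero =>
    rcases Nat.eq_zero_or_pos k with rfl | hk
    · simp
    · rw [Nat.digits_def' hb hk]
      simp
  | succ i ih =>
    rcases Nat.eq_zero_or_pos k with rfl | hk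
    · simp
    · rw [Nat.digits_def' hb hk]
      show (Nat.digits b (k / b)).getD i 0 = _
      rw [ih (k / b), Nat.div_div_eq_div_mul, ← pow_succ']

lemma pairwise_enumFrom {α : Type*} (l : List α) (n : ℕ) :
    ((l.zipIdx n).map Prod.swap).Pairwise (fun p q => p.1 < q.1) := by
  induction l generalizing n with
  | nil => simp
  | cons a t ih =>
    rw [List.zipIdx_cons, List.map_cons, List.pairwise_cons]
    exact ⟨fun p hp => by
      obtain ⟨⟨x, i⟩, hr, rfl⟩ := List.mem_map.1 hp
      have := (List.mem_zipIdx hr).1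
      show n < i
      omega, ih (n+1)⟩

lemma good_of_pairs {b : ℕ} (P : List (ℕ × ℕ)) (m : ℕ)
    (hP : P.Pairwise (fun p q => p.1 < q.1))
    (hmem : ∀ p ∈ P, 0 < p.2 ∧ p.2 < b ∧ m ≤ p.1) :
    Good b m (P.map fun p => p.2 * b ^ p.1) := by
  induction P generalizing m with
  | nil => exact Good.nil m
  | cons p P' ih =>
    rw [List.pairwise_cons] at hP
    obtain ⟨h1, h2, h3⟩ := hmem p (by simp)
    have hrw : p.2 * b ^ p.1 = p.2 * b ^ ((p.1 + 1) - 1) := by simp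
    rw [List.map_cons, hrw]
    exact Good.cons m p.2 (p.1+1) _ h1 h2 (by omega)
      (ih (p.1+1) hP.2 (fun q hq => ⟨(hmem q (by simp [hq])).1, (hmem q (by simp [hq])).2.1,
        hP.1 q hq⟩))

lemma terms_structure {b k : ℕ} (hb : 2 ≤ b) (hk : 0 < k) :
    ∃ L, terms b k = kapLow b k * b ^ (aLow b k - 1) :: L ∧
      Good b (aLow b k) L ∧ 0 < kapLow b k ∧ kapLow b k < b ∧ 1 ≤ aLow b k := by
  classical
  have hb1 : 1 < b := hb
  set d := Nat.digits b k with hd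
  set P := (d.zipIdx.map Prod.swap).filter (fun p => p.2 ≠ 0) with hPdef
  have hPfact : ∀ p ∈ P, p.2 ≠ 0 ∧ d[p.1]? = some p.2 := by
    intro p hp
    rw [hPdef, List.mem_filter] at hp
    refine ⟨by simpa using hp.2, ?_⟩
    obtain ⟨⟨x, i⟩, hr, hre⟩ := List.mem_map.1 hp.1
    subst hre
    exact List.mk_mem_zipIdx_iff_getElem?.1 hr
  have hPpair : P.Pairwise (fun p q => p.1 < q.1) := by
    rw [hPdef]
    exact (pairwise_enumFrom d 0).filter _
  -- P is nonempty
  have hPne : P ≠ [] := by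
    intro hnil
    have hdne : d ≠ [] := by
      rw [hd]
      exact Nat.digits_ne_nil_iff_ne_zero.2 (by omega)
    have hlast := Nat.getLast_digit_ne_zero b (m := k) (by omega)
    have hmem : d.getLast hdne ∈ d := List.getLast_mem hdne
    obtain ⟨i, hi, he⟩ := List.mem_iff_getElem.1 hmem
    have : (i, d.getLast hdne) ∈ d.zipIdx.map Prod.swap := by
      rw [List.mem_map]
      exact ⟨(d.getLast hdne, i), by rw [List.mk_mem_zipIdx_iff_getElem?, List.getElem?_eq_getElem hi, he], rfl⟩
    have := (List.filter_eq_nil_iff.1 hnil) _ this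
    simp only [decide_not, Bool.not_eq_true'] at this
    exact hlast (by simpa using this)
  obtain ⟨p0, rest, hPcons⟩ := List.exists_cons_of_ne_nil hPne
  -- aLow = p0.1 + 1
  have halow : aLow b k = p0.1 + 1 := by
    unfold aLow alist
    rw [List.getLast?_reverse]
    rw [← hd, ← hPdef, hPcons]
    simp
  -- digit values
  have hdig : ∀ p ∈ P, p.2 = k / b ^ p.1 % b := by
    intro p hp
    obtain ⟨-, h2⟩ := hPfact p hp
    rw [← digits_getD hb1 k p.1, ← hd, List.getD_eq_getElem?_getD, h2]
    rfl
  have hdlt : ∀ p ∈ P, p.2 < b := by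
    intro p hp
    obtain ⟨-, h2⟩ := hPfact p hp
    obtain ⟨hlt, he⟩ := List.getElem?_eq_some_iff.1 h2
    exact Nat.digits_lt_base hb1 (hd ▸ he ▸ List.getElem_mem hlt)
  have hkap : kapLow b k = p0.2 := by
    unfold kapLow
    rw [halow]
    simp only [Nat.add_sub_cancel]
    rw [← hdig p0 (by rw [hPcons]; simp)]
  refine ⟨rest.map fun p => p.2 * b ^ p.1, ?_, ?_, ?_, ?_, by omega⟩
  · show (P.map fun p => p.2 * b ^ p.1) = _
    rw [hPcons, List.map_cons, hkap, halow]
    simp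
  · rw [hPcons, List.pairwise_cons] at hPpair
    apply good_of_pairs _ _ hPpair.2
    intro q hq
    have hqP : q ∈ P := by rw [hPcons]; simp [hq]
    refine ⟨Nat.pos_of_ne_zero (hPfact q hqP).1, hdlt q hqP, ?_⟩
    rw [halow]
    exact hPpair.1 q hq
  · rw [hkap]
    exact Nat.pos_of_ne_zero (hPfact p0 (by rw [hPcons]; simp)).1
  · rw [hkap]
    exact hdlt p0 (by rw [hPcons]; simp)

section QP
variable {q : ℂ} {N : ℕ} {β : ℝ}

lemma qp_of_shift (hN : 0 < N) (hβ : 0 < β) {F : ℝ → ℂ}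
    (hshift : ∀ c, c < N → ∀ x' : ℝ, 0 ≤ x' → x' ≤ β →
      F ((c:ℝ) * β + x') = F ((c:ℝ) * β) + q ^ c * F x') :
    ∀ c, c < N → ∀ x' : ℝ, 0 ≤ x' → x' ≤ β →
      F ((c:ℝ)*β + x') = (∑ i ∈ Finset.range c, q^i) * F β + q^c * F x' := by
  have hF0 : F 0 = 0 := by
    have h := hshift 0 hN 0 le_rfl hβ.le
    simp only [Nat.cast_zero, zero_mul, add_zero, pow_zero, one_mul] at h
    exact (left_eq_add.1 h)
  have hmul : ∀ c, c ≤ N → F ((c:ℝ)*β) = (∑ i ∈ Finset.range c, q^i) * F β := by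
    intro c
    induction c with
    | zero => intro _; simp [hF0]
    | succ n ih =>
      intro h
      have hn : n < N := by omega
      have hs := hshift n hn β hβ.le le_rfl
      rw [show (((n+1:ℕ)):ℝ)*β = (n:ℝ)*β + β by push_cast; ring, hs, ih (by omega),
        Finset.sum_range_succ, add_mul]
  intro c hc x' h0 h1
  rw [hshift c hc x' h0 h1, hmul c hc.le]

lemma integral_qp (hq1 : q ≠ 1) (hqN : q ^ N = 1) (hβ : 0 < β) (hNβ : (N:ℝ) * β = 1)
    {F : ℝ → ℂ} (hF : ∀ u v : ℝ, IntervalIntegrable F volume u v)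
    (hqp : ∀ c, c < N → ∀ x' : ℝ, 0 ≤ x' → x' ≤ β →
      F ((c:ℝ)*β+x') = (∑ i ∈ Finset.range c, q^i) * F β + q^c * F x') :
    ∫ x in (0:ℝ)..1, F x = F β / (1 - q) := by
  have hq1' : (1:ℂ) - q ≠ 0 := sub_ne_zero.2 (Ne.symm hq1)
  have hq1'' : q - 1 ≠ 0 := sub_ne_zero.2 hq1
  have hN : 0 < N := by
    rcases Nat.eq_zero_or_pos N with rfl | h
    · simp at hNβ
    · exact h
  have hkey : ∀ i : ℕ, i < N → (∫ x in ((i:ℝ)*β)..((i:ℝ)*β + β), F x)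
      = (β:ℂ) * ((∑ j ∈ Finset.range i, q^j) * F β) + q^i * ∫ x in (0:ℝ)..β, F x := by
    intro i hi
    have hcomp := intervalIntegral.integral_comp_add_right (a := 0) (b := β) F ((i:ℝ)*β)
    rw [zero_add, add_comm β ((i:ℝ)*β)] at hcomp
    rw [← hcomp]
    have hae : ∀ᵐ y ∂(volume : Measure ℝ), y ∈ Set.uIoc (0:ℝ) β →
        F (y + (i:ℝ)*β) = (∑ j ∈ Finset.range i, q^j) * F β + q^i * F y := by
      apply Filter.Eventually.of_forall
      intro y hy
      rw [Set.uIoc_of_le hβ.le] at hy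
      rw [add_comm]
      exact hqp i hi y hy.1.le hy.2
    rw [intervalIntegral.integral_congr_ae hae,
      intervalIntegral.integral_add intervalIntegrable_const ((hF 0 β).const_mul _),
      intervalIntegral.integral_const, intervalIntegral.integral_const_mul, sub_zero,
      Complex.real_smul]
  have hadj := intervalIntegral.sum_integral_adjacent_intervals
    (a := fun i : ℕ => (i:ℝ)*β) (n := N) (f := F) (μ := volume) (fun i _ => hF _ _)
  beta_reduce at hadj
  rw [show ((0:ℕ):ℝ)*β = 0 by simp] at hadj
  rw [show ((N:ℕ):ℝ)*β = 1 by exact_mod_cast hNβ] at hadj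
  rw [← hadj]
  have hcongr : ∀ i ∈ Finset.range N, (∫ x in ((i:ℝ)*β)..(((i+1:ℕ)):ℝ)*β, F x)
      = (β:ℂ) * ((∑ j ∈ Finset.range i, q^j) * F β) + q^i * ∫ x in (0:ℝ)..β, F x := by
    intro i hi
    rw [show (((i+1:ℕ)):ℝ)*β = (i:ℝ)*β + β by push_cast; ring]
    exact hkey i (Finset.mem_range.1 hi)
  have hsum0 : (∑ i ∈ Finset.range N, q^i) = 0 := by
    rw [geom_sum_eq hq1, hqN]
    simp
  have hssum : (∑ i ∈ Finset.range N, ∑ j ∈ Finset.range i, q^j) = (N:ℂ) / (1 - q) := by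
    have hg : ∀ i ∈ Finset.range N, (∑ j ∈ Finset.range i, q^j) = (q^i - 1)/(q-1) :=
      fun i _ => geom_sum_eq hq1 i
    rw [Finset.sum_congr rfl hg, ← Finset.sum_div, Finset.sum_sub_distrib, hsum0,
      Finset.sum_const, Finset.card_range]
    field_simp
    ring
  rw [Finset.sum_congr rfl hcongr, Finset.sum_add_distrib, ← Finset.sum_mul, hsum0, zero_mul,
    add_zero, ← Finset.mul_sum, ← Finset.sum_mul, hssum]
  have hNβC : ((N:ℂ)) * (β:ℂ) = 1 := by exact_mod_cast hNβ
  calc (β:ℂ) * ((N:ℂ)/(1-q) * F β) = ((N:ℂ)*(β:ℂ)) * F β / (1-q) := by ring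
  _ = F β / (1-q) := by rw [hNβC, one_mul]

lemma shift_next (hq1 : q ≠ 1) (hβ : 0 < β) {F : ℝ → ℂ} {I : ℂ}
    (hFc : Continuous F)
    (hqp : ∀ c, c < N → ∀ x' : ℝ, 0 ≤ x' → x' ≤ β →
      F ((c:ℝ)*β+x') = (∑ i ∈ Finset.range c, q^i) * F β + q^c * F x')
    (hI : I = F β / (1 - q)) :
    ∀ c, c < N → ∀ x' : ℝ, 0 ≤ x' → x' ≤ β →
      (∫ y in (0:ℝ)..((c:ℝ)*β + x'), (F y - I)) =
        (∫ y in (0:ℝ)..((c:ℝ)*β), (F y - I)) + q ^ c * ∫ y in (0:ℝ)..x', (F y - I) := by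
  intro c hc x' h0 h1
  have hint : ∀ u v : ℝ, IntervalIntegrable (fun y => F y - I) volume u v :=
    fun u v => (hFc.sub continuous_const).intervalIntegrable u v
  rw [← intervalIntegral.integral_add_adjacent_intervals (hint 0 ((c:ℝ)*β))
    (hint ((c:ℝ)*β) ((c:ℝ)*β + x'))]
  congr 1
  have hcomp := intervalIntegral.integral_comp_add_right (a := 0) (b := x')
    (fun y => F y - I) ((c:ℝ)*β)
  rw [zero_add, add_comm x' ((c:ℝ)*β)] at hcomp
  rw [← hcomp]
  have hae : ∀ᵐ y ∂(volume : Measure ℝ), y ∈ Set.uIoc (0:ℝ) x' →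
      (F (y + (c:ℝ)*β) - I) =
        ((∑ i ∈ Finset.range c, q^i) * F β - (1 - q^c) * I) + q^c * (F y - I) := by
    apply Filter.Eventually.of_forall
    intro y hy
    rw [Set.uIoc_of_le h0] at hy
    rw [add_comm, hqp c hc y hy.1.le (hy.2.trans h1)]
    ring
  rw [intervalIntegral.integral_congr_ae hae,
    intervalIntegral.integral_add intervalIntegrable_const ((hint 0 x').const_mul _),
    intervalIntegral.integral_const, intervalIntegral.integral_const_mul]
  have hz : (∑ i ∈ Finset.range c, q^i) * F β - (1 - q^c) * I = 0 := by
    rw [hI, geom_sum_eq hq1]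
    have hq1' : (1:ℂ) - q ≠ 0 := sub_ne_zero.2 (Ne.symm hq1)
    have hq1'' : q - 1 ≠ 0 := sub_ne_zero.2 hq1
    field_simp
    ring
  rw [hz]
  simp

end QP

lemma main_all {b k : ℕ} (hb : 2 ≤ b) (hk : 0 < k) (j : ℕ) :
    Continuous (Wj b k j) ∧
    (∀ c, c < b ^ aLow b k → ∀ x' : ℝ, 0 ≤ x' → x' ≤ (b:ℝ)^(-(aLow b k:ℤ)) →
      Wj b k j ((c:ℝ) * (b:ℝ)^(-(aLow b k:ℤ)) + x') =
        (∑ i ∈ Finset.range c, (omegaBar b ^ kapLow b k)^i) *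
            Wj b k j ((b:ℝ)^(-(aLow b k:ℤ)))
          + (omegaBar b ^ kapLow b k)^c * Wj b k j x') ∧
    Ij b k j = Wj b k j ((b:ℝ)^(-(aLow b k:ℤ))) / (1 - omegaBar b ^ kapLow b k) := by
  obtain ⟨L, hterms, hgood, hκ0, hκb, ha⟩ := terms_structure hb hk
  set a := aLow b k with hadef
  set κ := kapLow b k with hκdef
  set β : ℝ := (b:ℝ)^(-(a:ℤ)) with hβdef
  set N := b ^ a with hNdef
  set q : ℂ := omegaBar b ^ κ with hqdef
  have hbne : (b:ℝ) ≠ 0 := by positivity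
  have hβpos : 0 < β := by rw [hβdef]; positivity
  have hNpos : 0 < N := by rw [hNdef]; exact Nat.pow_pos (by omega)
  have hNβ : (N:ℝ) * β = 1 := by
    rw [hNdef, hβdef]
    push_cast
    rw [← zpow_natCast (b:ℝ) a, ← zpow_add₀ hbne]
    simp
  have hq1 : q ≠ 1 := omegaBar_pow_ne_one b hb hκ0 hκb
  have hqb : q ^ b = 1 := by
    rw [hqdef, pow_right_comm, omegaBar_pow_base b hb, one_pow]
  have hqN : q ^ N = 1 := by
    have : N = b * b ^ (a - 1) := by
      rw [hNdef, ← pow_succ']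
      congr 1
      omega
    rw [this, pow_mul, hqb, one_pow]
  obtain ⟨hGcont, hGper⟩ := waux_good hb hgood
  rw [← hβdef] at hGper
  have haeβ : ∀ᵐ y ∂(volume : Measure ℝ), y ∈ ({β}ᶜ : Set ℝ) :=
    compl_mem_ae_iff.2 (MeasureTheory.measure_singleton β)
  set F0 : ℝ → ℂ := fun y => (starRingEnd ℂ) (wal b (κ * b ^ (a-1)) y) * WAux b L y with hF0
  have hwal : ∀ y, F0 y = omegaBar b ^ (κ * xdigit b a y) * WAux b L y := fun y => by
    rw [hF0]; simp only; rw [conj_wal_single hb hκ0 hκb ha]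
  have hint0 : ∀ u v : ℝ, IntervalIntegrable F0 volume u v := by
    intro u v
    have : F0 = fun y => omegaBar b ^ (κ * xdigit b a y) * WAux b L y := funext hwal
    rw [this]
    exact intervalIntegrable_pow_mul hGcont u v
  have hWeq : ∀ x, W b k x = ∫ y in (0:ℝ)..x, F0 y := by
    intro x
    rw [W, hterms]
    rfl
  have hWfun : W b k = fun x => ∫ y in (0:ℝ)..x, F0 y := funext hWeq
  have hcontW : Continuous (W b k) := by
    rw [hWfun]
    exact intervalIntegral.continuous_primitive hint0 0
  -- shift property of W
  have hshiftW : ∀ c, c < N → ∀ x' : ℝ, 0 ≤ x' → x' ≤ β →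
      W b k ((c:ℝ) * β + x') = W b k ((c:ℝ) * β) + q ^ c * W b k x' := by
    intro c hc x' h0 h1
    rw [hWeq, hWeq, hWeq,
      ← intervalIntegral.integral_add_adjacent_intervals (hint0 0 ((c:ℝ)*β))
        (hint0 ((c:ℝ)*β) ((c:ℝ)*β + x'))]
    congr 1
    have hcomp := intervalIntegral.integral_comp_add_right (a := 0) (b := x') F0 ((c:ℝ)*β)
    rw [zero_add, add_comm x' ((c:ℝ)*β)] at hcomp
    rw [← hcomp]
    have hae1 : ∀ᵐ y ∂(volume : Measure ℝ), y ∈ Set.uIoc (0:ℝ) x' →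
        F0 (y + (c:ℝ)*β) = q^c * WAux b L y := by
      filter_upwards [haeβ] with y hyβ hy
      rw [Set.uIoc_of_le h0] at hy
      have hy0 : 0 ≤ y := hy.1.le
      have hyb : y < β := lt_of_le_of_ne (hy.2.trans h1) (by simpa using hyβ)
      have hG : WAux b L ((c:ℝ)*β + y) = WAux b L y := by
        rw [add_comm]
        exact (hGper.nat_mul c) y
      rw [hwal, add_comm y ((c:ℝ)*β), xdigit_add_nat hb a c hy0 hyb, hG]
      rw [pow_mul, pow_mod_eq hqb c]
    have hae2 : ∀ᵐ y ∂(volume : Measure ℝ), y ∈ Set.uIoc (0:ℝ) x' →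
        F0 y = WAux b L y := by
      filter_upwards [haeβ] with y hyβ hy
      rw [Set.uIoc_of_le h0] at hy
      have hy0 : 0 ≤ y := hy.1.le
      have hyb : y < β := lt_of_le_of_ne (hy.2.trans h1) (by simpa using hyβ)
      rw [hwal]
      have := xdigit_add_nat hb a 0 hy0 hyb
      rw [Nat.cast_zero, zero_mul, zero_add] at this
      rw [this]
      simp
    rw [intervalIntegral.integral_congr_ae hae1, intervalIntegral.integral_congr_ae hae2,
      intervalIntegral.integral_const_mul]
  have hqp0 := qp_of_shift hNpos hβpos hshiftW
  induction j with
  | zero =>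
    refine ⟨hcontW, hqp0, ?_⟩
    show (∫ x in (0:ℝ)..1, W b k x) = _
    exact integral_qp hq1 hqN hβpos hNβ (fun u v => hcontW.intervalIntegrable u v) hqp0
  | succ n ih =>
    obtain ⟨hc, hqp, hIj⟩ := ih
    have hWj : Wj b k (n+1) = fun x => ∫ y in (0:ℝ)..x, (Wj b k n y - Ij b k n) := rfl
    have hcont' : Continuous (Wj b k (n+1)) := by
      rw [hWj]
      exact intervalIntegral.continuous_primitive
        (fun u v => (hc.sub continuous_const).intervalIntegrable u v) 0
    have hshift' : ∀ c, c < N → ∀ x' : ℝ, 0 ≤ x' → x' ≤ β →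
        Wj b k (n+1) ((c:ℝ) * β + x') = Wj b k (n+1) ((c:ℝ) * β) + q ^ c * Wj b k (n+1) x' := by
      intro c hc' x' h0 h1
      exact shift_next hq1 hβpos hc hqp hIj c hc' x' h0 h1
    have hqp' := qp_of_shift hNpos hβpos hshift'
    refine ⟨hcont', hqp', ?_⟩
    show (∫ x in (0:ℝ)..1, Wj b k (n+1) x) = _
    exact integral_qp hq1 hqN hβpos hNβ (fun u v => hcont'.intervalIntegrable u v) hqp'


/-- Lemma 5.3 (quasi-periodicity of `W_k^{(j)}` and the value of `I^{(j)}(k)`). -/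
theorem Wj_quasi_periodic (b : ℕ) (hb : 2 ≤ b) (k : ℕ) (hk : 0 < k) (j : ℕ) :
    (∀ (c : ℕ) (x' : ℝ), c < b ^ aLow b k → 0 ≤ x' → x' < (b:ℝ) ^ (-(aLow b k : ℤ)) →
      Wj b k j ((c : ℝ) * (b:ℝ) ^ (-(aLow b k : ℤ)) + x') =
        (1 - omegaBar b ^ (c * kapLow b k)) / (1 - omegaBar b ^ kapLow b k) *
            Wj b k j ((b:ℝ) ^ (-(aLow b k : ℤ))) +
          omegaBar b ^ (c * kapLow b k) * Wj b k j x') ∧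
    Ij b k j = Wj b k j ((b:ℝ) ^ (-(aLow b k : ℤ))) / (1 - omegaBar b ^ kapLow b k) := by

  obtain ⟨L, hterms, hgood, hκ0, hκb, ha⟩ := terms_structure hb hk
  obtain ⟨hcont, hqp, hIj⟩ := main_all hb hk j
  have hq1 : omegaBar b ^ kapLow b k ≠ 1 := omegaBar_pow_ne_one b hb hκ0 hκb
  refine ⟨?_, hIj⟩
  intro c x' hc h0 h1
  have := hqp c hc x' h0 h1.le
  rw [this, pow_mul', geom_sum_eq hq1]
  congr 2
  rw [show ((1:ℂ) - (omegaBar b ^ kapLow b k)^c) = -((omegaBar b ^ kapLow b k)^c - 1) by ring,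
    show ((1:ℂ) - omegaBar b ^ kapLow b k) = -(omegaBar b ^ kapLow b k - 1) by ring,
    neg_div_neg_eq]


end WalshPaper
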